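/- arXiv:1912.03199 — 5 statements merged into one kernel-verified Lean document; each statement's English description precedes it below -/
import Mathlib

section
/- Let g be a Lie algebra with invariant inner product, k ⊆ g a subalgebra with orthogonal complement p satisfying [k,k] ⊆ k and [k,p] ⊆ p. Let P : g → ℝ be a polynomial invariant under the adjoint action of g (equivalently ⟨∇P(x),[ξ,x]⟩ = 0 for all ξ ∈ g). For λ ∈ ℝ define P_λ(x) = P(pr_k(x) + λ pr_p(x)). Then P_λ is ad_k-invariant: ⟨∇P_λ(x), [ξ, x]⟩ = 0 for all ξ ∈ k and all x ∈ g. -/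
open RealInnerProductSpace

/-! The map `T = pr_K + l • pr_{Kᗮ}` commutes with every `ad ξ`, `ξ ∈ K`, because `ad ξ` preserves
both `K` and `Kᗮ`; hence `∇(P ∘ T) x` pairs with `[ξ, x]` as `∇P (T x)` pairs with `[ξ, T x]`,
which vanishes by the adjoint invariance of `P`. -/

namespace Submodule

variable {E : Type*} [NormedAddCommGroup E] [InnerProductSpace ℝ E]
  (K : Submodule ℝ E) [K.HasOrthogonalProjection]

noncomputable def scaleOrthogonal (l : ℝ) : E →L[ℝ] E :=
  K.starProjection + l • (1 - K.starProjection)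

theorem commute_starProjection_of_mapsTo {A : E →ₗ[ℝ] E}
    (hK : ∀ x ∈ K, A x ∈ K) (hKperp : ∀ x ∈ Kᗮ, A x ∈ Kᗮ) :
    Commute (K.starProjection : E →ₗ[ℝ] E) A := by
  rw [LinearMap.IsIdempotentElem.commute_iff
      (ContinuousLinearMap.IsIdempotentElem.toLinearMap K.isIdempotentElem_starProjection),
    show LinearMap.range (K.starProjection : E →ₗ[ℝ] E) = K from K.range_starProjection,
    show LinearMap.ker (K.starProjection : E →ₗ[ℝ] E) = Kᗮ from K.ker_starProjection]
  exact ⟨hK, hKperp⟩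

theorem scaleOrthogonal_apply_comm_of_mapsTo {A : E →ₗ[ℝ] E}
    (hK : ∀ x ∈ K, A x ∈ K) (hKperp : ∀ x ∈ Kᗮ, A x ∈ Kᗮ) (l : ℝ) (x : E) :
    K.scaleOrthogonal l (A x) = A (K.scaleOrthogonal l x) := by
  have hcomm : K.starProjection (A x) = A (K.starProjection x) :=
    LinearMap.congr_fun (K.commute_starProjection_of_mapsTo hK hKperp).eq x
  simp [scaleOrthogonal, hcomm]

end Submodule

theorem inner_gradient_comp_continuousLinearMap {E : Type*} [NormedAddCommGroup E]
    [InnerProductSpace ℝ E] [CompleteSpace E] {f : E → ℝ} (T : E →L[ℝ] E) {x : E}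
    (hf : DifferentiableAt ℝ f (T x)) (v : E) :
    ⟪gradient (f ∘ T) x, v⟫ = ⟪gradient f (T x), T v⟫ := by
  simp [inner_gradient_left, fderiv_comp x hf T.differentiableAt]

theorem inner_bracket_eq_zero_of_bracket_eq_zero {E : Type*} [NormedAddCommGroup E]
    [InnerProductSpace ℝ E] {bk : E →ₗ[ℝ] E →ₗ[ℝ] E} (hskew : bk.IsAlt)
    (hinv : ∀ x y z : E, ⟪bk x y, z⟫ = ⟪x, bk y z⟫) {a y : E} (h : bk a y = 0) (v : E) :
    ⟪a, bk v y⟫ = 0 := by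
  rw [← hskew.neg y v, inner_neg_right, ← hinv, h, inner_zero_left, neg_zero]

theorem shifted_invariant_is_adK_invariant_general
    {E : Type*} [NormedAddCommGroup E] [InnerProductSpace ℝ E] [FiniteDimensional ℝ E]
    (bk : E →ₗ[ℝ] E →ₗ[ℝ] E)
    (hskew : ∀ x : E, bk x x = 0)
    (hinv : ∀ x y z : E, ⟪bk x y, z⟫ = ⟪x, bk y z⟫)
    (K : Submodule ℝ E)
    (hKsub : ∀ x ∈ K, ∀ y ∈ K, bk x y ∈ K)
    (hKp : ∀ x ∈ K, ∀ y ∈ Kᗮ, bk x y ∈ Kᗮ)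
    (P : E → ℝ) (hPd : Differentiable ℝ P)
    (hP : ∀ y : E, bk (gradient P y) y = 0)
    (l : ℝ) (Pl : E → ℝ)
    (hPl : ∀ x : E, Pl x =
      P ((K.orthogonalProjectionOnto x : E) + l • (x - (K.orthogonalProjectionOnto x : E)))) :
    ∀ ξ ∈ K, ∀ x : E, ⟪gradient Pl x, bk ξ x⟫ = 0 := by
  intro ξ hξ x
  have hPl_comp : Pl = P ∘ K.scaleOrthogonal l := funext fun y => by
    simp [hPl, Submodule.scaleOrthogonal]
  rw [hPl_comp, inner_gradient_comp_continuousLinearMap _ (hPd _),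
    K.scaleOrthogonal_apply_comm_of_mapsTo (hKsub ξ hξ) (hKp ξ hξ)]
  exact inner_bracket_eq_zero_of_bracket_eq_zero hskew hinv (hP _) ξ

/-- Let `E` be a finite-dimensional real Lie algebra (bracket `bk`) with an
invariant inner product, `K` a Lie subalgebra with orthogonal complement `p = Kᗮ`
satisfying `[K, K] ⊆ K` and `[K, Kᗮ] ⊆ Kᗮ`.  If `P` is a differentiable adjoint-invariant
function (`[∇P(y), y] = 0` for all `y`) and `Pl x = P (pr_K x + l • pr_p x)`, then `Pl` is
`ad_K`-invariant: `⟨∇Pl(x), [ξ, x]⟩ = 0` for all `ξ ∈ K` and all `x`. -/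
theorem shifted_invariant_is_adK_invariant
    {E : Type*} [NormedAddCommGroup E] [InnerProductSpace ℝ E] [FiniteDimensional ℝ E]
    (bk : E →ₗ[ℝ] E →ₗ[ℝ] E)
    (hskew : ∀ x : E, bk x x = 0)
    (hjac : ∀ x y z : E, bk x (bk y z) = bk (bk x y) z + bk y (bk x z))
    (hinv : ∀ x y z : E, ⟪bk x y, z⟫ = ⟪x, bk y z⟫)
    (K : Submodule ℝ E)
    (hKsub : ∀ x ∈ K, ∀ y ∈ K, bk x y ∈ K)
    (hKp : ∀ x ∈ K, ∀ y ∈ Kᗮ, bk x y ∈ Kᗮ)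
    (P : E → ℝ) (hPd : Differentiable ℝ P)
    (hP : ∀ y : E, bk (gradient P y) y = 0)
    (l : ℝ) (Pl : E → ℝ)
    (hPl : ∀ x : E, Pl x =
      P ((K.orthogonalProjectionOnto x : E) + l • (x - (K.orthogonalProjectionOnto x : E)))) :
    ∀ ξ ∈ K, ∀ x : E, ⟪gradient Pl x, bk ξ x⟫ = 0 :=
  shifted_invariant_is_adK_invariant_general bk hskew hinv K hKsub hKp P hPd hP l Pl hPl
end

section
/- In particular, if k is a Cartan (abelian) subalgebra of g, then for any two adjoint-invariant functions f, p on g and any λ, μ ∈ ℝ, the shifted functions f_λ(x) = f(pr_k x + λ pr_{k^⊥} x) and p_μ(x) = p(pr_k x + μ pr_{k^⊥} x) Lie–Poisson commute on g. -/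
/-!
Write `T_l = pr_K + l • pr_{Kᗮ}`, which is self-adjoint, so `∇f_l(x) = T_l u` and `∇p_m(x) = T_m v`
with `u = ∇f(T_l x)`, `v = ∇p(T_m x)`, and invariance gives `[u, T_l x] = 0 = [v, T_m x]`.
Expand `T_l u = l u + (1 - l) pr_K u`. The bracket of the two `K`-components vanishes as `K` is
abelian, and the mixed terms vanish because `l x - T_l x ∈ K`. For the remaining term `⟪x, [u, v]⟫`,
if `l ≠ m` the relations `l ⟪x, [u, v]⟫ = (l - 1) ⟪pr_K x, [u, v]⟫` and the same with `m` force it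
to vanish. If `l = m`, then `u` and `v` are gradients of invariant functions at one point `y`, and
the gradient of an invariant function at `y` commutes with the centralizer of `y`: for `[w, y] = 0`
the flow of `ad w` preserves `f` and fixes `y`, so `df_y` kills the range of `ad w`.
-/

open RealInnerProductSpace

section Flow

variable {E : Type*} [NormedAddCommGroup E] [NormedSpace ℝ E] [CompleteSpace E]

theorem eq_apply_zero_of_hasDerivAt_zero {F : Type*} [NormedAddCommGroup F] [NormedSpace ℝ F]
    {g : ℝ → F} (hg : ∀ s, HasDerivAt g 0 s) (t : ℝ) : g t = g 0 :=
  is_const_of_deriv_eq_zero (fun s => (hg s).differentiableAt) (fun s => (hg s).deriv) t 0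

theorem hasDerivAt_exp_smul_apply (M : E →L[ℝ] E) (z : E) (t : ℝ) :
    HasDerivAt (fun s : ℝ => NormedSpace.exp (s • M) z) (M (NormedSpace.exp (t • M) z)) t := by
  simpa using (hasDerivAt_exp_smul_const' M t).clm_apply (hasDerivAt_const t z)

theorem exp_smul_apply_eq_self {M : E →L[ℝ] E} {y : E} (hy : M y = 0) (t : ℝ) :
    NormedSpace.exp (t • M) y = y := by
  have hderiv (s : ℝ) : HasDerivAt (fun s : ℝ => NormedSpace.exp (s • M) y) 0 s := by
    simpa [hy] using (hasDerivAt_exp_smul_const M s).clm_apply (hasDerivAt_const s y)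
  simpa using eq_apply_zero_of_hasDerivAt_zero hderiv t

theorem apply_exp_smul_apply_eq {f : E → ℝ} (hf : Differentiable ℝ f) {M : E →L[ℝ] E}
    (hM : ∀ z, fderiv ℝ f z (M z) = 0) (t : ℝ) (z : E) :
    f (NormedSpace.exp (t • M) z) = f z := by
  have hderiv (s : ℝ) : HasDerivAt (fun s : ℝ => f (NormedSpace.exp (s • M) z)) 0 s := by
    have := (hf _).hasFDerivAt.comp_hasDerivAt s (hasDerivAt_exp_smul_apply M z s)
    rwa [hM] at this
  simpa using eq_apply_zero_of_hasDerivAt_zero hderiv t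

theorem fderiv_apply_map_eq_zero {f : E → ℝ} (hf : Differentiable ℝ f) {M : E →L[ℝ] E}
    (hM : ∀ z, fderiv ℝ f z (M z) = 0) {y : E} (hy : M y = 0) (h : E) :
    fderiv ℝ f y (M h) = 0 := by
  set L := fderiv ℝ f y
  have hL (t : ℝ) : L.comp (NormedSpace.exp (t • M)) = L := by
    have hcomp := (hf (NormedSpace.exp (t • M) y)).hasFDerivAt.comp y
      (NormedSpace.exp (t • M)).hasFDerivAt
    rw [exp_smul_apply_eq_self hy] at hcomp
    have hinvar : f ∘ ⇑(NormedSpace.exp (t • M)) = f := funext (apply_exp_smul_apply_eq hf hM t)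
    rw [← hcomp.fderiv, hinvar]
  have hderiv := L.hasFDerivAt.comp_hasDerivAt (0 : ℝ) (hasDerivAt_exp_smul_apply M h 0)
  simp only [Function.comp_def, ← ContinuousLinearMap.comp_apply, hL] at hderiv
  simpa using hderiv.deriv.symm.trans (deriv_const 0 (L h))

end Flow

theorem gradient_comp_clm {E F : Type*} [NormedAddCommGroup E] [InnerProductSpace ℝ E]
    [CompleteSpace E] [NormedAddCommGroup F] [InnerProductSpace ℝ F] [CompleteSpace F]
    {f : F → ℝ} (T : E →L[ℝ] F) {x : E} (hf : DifferentiableAt ℝ f (T x)) :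
    gradient (f ∘ T) x = T.adjoint (gradient f (T x)) := by
  refine ext_inner_right ℝ fun h => ?_
  rw [inner_gradient_left, fderiv_comp x hf T.differentiableAt, ContinuousLinearMap.fderiv,
    ContinuousLinearMap.comp_apply, ← inner_gradient_left, ContinuousLinearMap.adjoint_inner_left]

namespace Submodule

variable {E : Type*} [NormedAddCommGroup E] [InnerProductSpace ℝ E]
  (K : Submodule ℝ E) [K.HasOrthogonalProjection]

noncomputable def shiftedProjection (l : ℝ) : E →L[ℝ] E :=
  K.starProjection + l • Kᗮ.starProjection

theorem shiftedProjection_apply (l : ℝ) (x : E) :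
    K.shiftedProjection l x = K.starProjection x + l • (x - K.starProjection x) := by
  simp [shiftedProjection]

theorem shiftedProjection_apply_eq_smul_add (l : ℝ) (x : E) :
    K.shiftedProjection l x = l • x + (1 - l) • K.starProjection x := by
  rw [shiftedProjection_apply]
  module

theorem isSelfAdjoint_shiftedProjection [CompleteSpace E] (l : ℝ) :
    IsSelfAdjoint (K.shiftedProjection l) :=
  (isSelfAdjoint_starProjection K).add
    ((IsSelfAdjoint.all l).smul (isSelfAdjoint_starProjection Kᗮ))

theorem gradient_eq_shiftedProjection [CompleteSpace E] {f g : E → ℝ} (hf : Differentiable ℝ f)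
    (l : ℝ) (hg : ∀ x, g x =
      f ((K.orthogonalProjectionOnto x : E) + l • (x - (K.orthogonalProjectionOnto x : E))))
    (x : E) :
    gradient g x = K.shiftedProjection l (gradient f (K.shiftedProjection l x)) := by
  have hg' : g = f ∘ K.shiftedProjection l :=
    funext fun z => by simp [hg, shiftedProjection_apply]
  rw [hg', gradient_comp_clm _ (hf _), (K.isSelfAdjoint_shiftedProjection l).adjoint_eq]

end Submodule

section InvariantBracket

variable {E : Type*} [NormedAddCommGroup E] [InnerProductSpace ℝ E]
  {bk : E →ₗ[ℝ] E →ₗ[ℝ] E}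

theorem bk_swap (hskew : ∀ x, bk x x = 0) (a b : E) : bk a b = -bk b a := by
  have h := hskew (a + b)
  simp only [map_add, LinearMap.add_apply, hskew, zero_add, add_zero] at h
  exact eq_neg_of_add_eq_zero_right h

theorem inner_bk_eq_zero_of_bk_right_eq_zero (hinv : ∀ x y z, ⟪bk x y, z⟫ = ⟪x, bk y z⟫)
    {a b y : E} (h : bk b y = 0) : ⟪y, bk a b⟫ = 0 := by
  rw [real_inner_comm, hinv, h, inner_zero_right]

theorem inner_bk_eq_zero_of_bk_left_eq_zero (hskew : ∀ x, bk x x = 0)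
    (hinv : ∀ x y z, ⟪bk x y, z⟫ = ⟪x, bk y z⟫) {a b y : E} (h : bk a y = 0) :
    ⟪y, bk a b⟫ = 0 := by
  rw [← hinv, bk_swap hskew, h, neg_zero, inner_zero_left]

theorem bk_gradient_eq_zero_of_bk_eq_zero [FiniteDimensional ℝ E] (hskew : ∀ x, bk x x = 0)
    (hinv : ∀ x y z, ⟪bk x y, z⟫ = ⟪x, bk y z⟫) {f : E → ℝ} (hfd : Differentiable ℝ f)
    (hf : ∀ z, bk (gradient f z) z = 0) {w y : E} (hw : bk w y = 0) :
    bk (gradient f y) w = 0 := by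
  set M : E →L[ℝ] E := LinearMap.toContinuousLinearMap (bk w)
  have hM (z : E) : fderiv ℝ f z (M z) = 0 := by
    rw [← inner_gradient_left]
    change ⟪gradient f z, bk w z⟫ = 0
    rw [← hinv, real_inner_comm]
    exact inner_bk_eq_zero_of_bk_left_eq_zero hskew hinv (hf z)
  refine inner_self_eq_zero (𝕜 := ℝ) |>.mp ?_
  rw [hinv, inner_gradient_left]
  exact fderiv_apply_map_eq_zero hfd hM hw _

variable (K : Submodule ℝ E) [K.HasOrthogonalProjection]

theorem mul_inner_eq_inner_shiftedProjection_sub (l : ℝ) (x z : E) :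
    l * ⟪x, z⟫ = ⟪K.shiftedProjection l x, z⟫ - (1 - l) * ⟪K.starProjection x, z⟫ := by
  rw [K.shiftedProjection_apply_eq_smul_add, inner_add_left, real_inner_smul_left,
    real_inner_smul_left]
  ring

theorem mul_inner_bk_mem_right_eq_zero (hskew : ∀ x, bk x x = 0)
    (hinv : ∀ x y z, ⟪bk x y, z⟫ = ⟪x, bk y z⟫) (hab : ∀ a ∈ K, ∀ b ∈ K, bk a b = 0)
    {l : ℝ} {a u x : E} (ha : a ∈ K) (hu : bk u (K.shiftedProjection l x) = 0) :
    l * ⟪x, bk u a⟫ = 0 := by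
  rw [mul_inner_eq_inner_shiftedProjection_sub K,
    inner_bk_eq_zero_of_bk_left_eq_zero hskew hinv hu,
    inner_bk_eq_zero_of_bk_right_eq_zero hinv (hab a ha _ (K.starProjection_apply_mem x))]
  ring

theorem mul_inner_bk_mem_left_eq_zero (hskew : ∀ x, bk x x = 0)
    (hinv : ∀ x y z, ⟪bk x y, z⟫ = ⟪x, bk y z⟫) (hab : ∀ a ∈ K, ∀ b ∈ K, bk a b = 0)
    {m : ℝ} {a v x : E} (ha : a ∈ K) (hv : bk v (K.shiftedProjection m x) = 0) :
    m * ⟪x, bk a v⟫ = 0 := by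
  rw [bk_swap hskew, inner_neg_right, mul_neg,
    mul_inner_bk_mem_right_eq_zero K hskew hinv hab ha hv, neg_zero]

theorem inner_bk_eq_zero_of_ne (hskew : ∀ x, bk x x = 0)
    (hinv : ∀ x y z, ⟪bk x y, z⟫ = ⟪x, bk y z⟫) {l m : ℝ} {u v x : E}
    (hu : bk u (K.shiftedProjection l x) = 0) (hv : bk v (K.shiftedProjection m x) = 0)
    (hlm : l ≠ m) : ⟪x, bk u v⟫ = 0 := by
  have hl := mul_inner_eq_inner_shiftedProjection_sub K l x (bk u v)
  have hm := mul_inner_eq_inner_shiftedProjection_sub K m x (bk u v)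
  rw [inner_bk_eq_zero_of_bk_left_eq_zero hskew hinv hu] at hl
  rw [inner_bk_eq_zero_of_bk_right_eq_zero hinv hv] at hm
  have hproj : ⟪x, bk u v⟫ = ⟪K.starProjection x, bk u v⟫ :=
    mul_left_cancel₀ (sub_ne_zero.mpr hlm) (by linear_combination hl - hm)
  linear_combination hl + (1 - l) * hproj

theorem inner_bk_shiftedProjection_eq_zero (hskew : ∀ x, bk x x = 0)
    (hinv : ∀ x y z, ⟪bk x y, z⟫ = ⟪x, bk y z⟫) (hab : ∀ a ∈ K, ∀ b ∈ K, bk a b = 0)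
    {l m : ℝ} {u v x : E} (hu : bk u (K.shiftedProjection l x) = 0)
    (hv : bk v (K.shiftedProjection m x) = 0) (huv : ⟪x, bk u v⟫ = 0) :
    ⟪x, bk (K.shiftedProjection l u) (K.shiftedProjection m v)⟫ = 0 := by
  have hu' := mul_inner_bk_mem_right_eq_zero K hskew hinv hab (K.starProjection_apply_mem v) hu
  have hv' := mul_inner_bk_mem_left_eq_zero K hskew hinv hab (K.starProjection_apply_mem u) hv
  rw [K.shiftedProjection_apply_eq_smul_add, K.shiftedProjection_apply_eq_smul_add]
  simp only [map_add, map_smul, LinearMap.add_apply, LinearMap.smul_apply, inner_add_right,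
    real_inner_smul_right,
    hab _ (K.starProjection_apply_mem u) _ (K.starProjection_apply_mem v), inner_zero_right]
  linear_combination (l * m) * huv + (1 - m) * hu' + (1 - l) * hv'

end InvariantBracket

theorem cartan_shifted_invariants_commute_general
    {E : Type*} [NormedAddCommGroup E] [InnerProductSpace ℝ E] [FiniteDimensional ℝ E]
    (bk : E →ₗ[ℝ] E →ₗ[ℝ] E)
    (hskew : ∀ x : E, bk x x = 0)
    (hinv : ∀ x y z : E, ⟪bk x y, z⟫ = ⟪x, bk y z⟫)
    (K : Submodule ℝ E)
    (hab : ∀ a ∈ K, ∀ b ∈ K, bk a b = 0)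
    (f p : E → ℝ) (hfd : Differentiable ℝ f) (hpd : Differentiable ℝ p)
    (hf : ∀ z : E, bk (gradient f z) z = 0)
    (hp : ∀ z : E, bk (gradient p z) z = 0)
    (l m : ℝ) (fl pm : E → ℝ)
    (hfl : ∀ x : E, fl x =
      f ((K.orthogonalProjectionOnto x : E) + l • (x - (K.orthogonalProjectionOnto x : E))))
    (hpm : ∀ x : E, pm x =
      p ((K.orthogonalProjectionOnto x : E) + m • (x - (K.orthogonalProjectionOnto x : E)))) :
    ∀ x : E, ⟪x, bk (gradient fl x) (gradient pm x)⟫ = 0 := by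
  intro x
  rw [K.gradient_eq_shiftedProjection hfd l hfl, K.gradient_eq_shiftedProjection hpd m hpm]
  refine inner_bk_shiftedProjection_eq_zero K hskew hinv hab (hf _) (hp _) ?_
  rcases eq_or_ne l m with rfl | hlm
  · rw [bk_gradient_eq_zero_of_bk_eq_zero hskew hinv hfd hf (hp _), inner_zero_right]
  · exact inner_bk_eq_zero_of_ne K hskew hinv (hf _) (hp _) hlm

/-- if `K` is an abelian (Cartan) subalgebra of a Lie algebra `E` with
invariant inner product, and `f`, `p` are adjoint-invariant differentiable functions,
then for any `l, m ∈ ℝ` the shifted functions `f_l(x) = f(pr_K x + l • pr_{Kᗮ} x)` and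
`p_m(x) = p(pr_K x + m • pr_{Kᗮ} x)` Lie–Poisson commute on `E`. -/
theorem cartan_shifted_invariants_commute
    {E : Type*} [NormedAddCommGroup E] [InnerProductSpace ℝ E] [FiniteDimensional ℝ E]
    (bk : E →ₗ[ℝ] E →ₗ[ℝ] E)
    (hskew : ∀ x : E, bk x x = 0)
    (hjac : ∀ x y z : E, bk x (bk y z) = bk (bk x y) z + bk y (bk x z))
    (hinv : ∀ x y z : E, ⟪bk x y, z⟫ = ⟪x, bk y z⟫)
    (K : Submodule ℝ E)
    (hab : ∀ a ∈ K, ∀ b ∈ K, bk a b = 0)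
    (f p : E → ℝ) (hfd : Differentiable ℝ f) (hpd : Differentiable ℝ p)
    (hf : ∀ z : E, bk (gradient f z) z = 0)
    (hp : ∀ z : E, bk (gradient p z) z = 0)
    (l m : ℝ) (fl pm : E → ℝ)
    (hfl : ∀ x : E, fl x =
      f ((K.orthogonalProjectionOnto x : E) + l • (x - (K.orthogonalProjectionOnto x : E))))
    (hpm : ∀ x : E, pm x =
      p ((K.orthogonalProjectionOnto x : E) + m • (x - (K.orthogonalProjectionOnto x : E)))) :
    ∀ x : E, ⟪x, bk (gradient fl x) (gradient pm x)⟫ = 0 :=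
  cartan_shifted_invariants_commute_general bk hskew hinv K hab f p hfd hpd hf hp l m fl pm hfl hpm
end

section
/- Let g be a Lie algebra with invariant inner product and P an adjoint-invariant polynomial on g (i.e., [∇P(z), z] = 0 for all z). Fix a ∈ g and define P_{a,λ}(x) = P(x + λa). Then each coefficient polynomial P_{a,k} in the expansion P(x+λa) = Σ_k P_{a,k}(x) λ^k is invariant under the adjoint action of the isotropy subalgebra g(a) = {ξ ∈ g : [ξ,a] = 0}: that is, ⟨∇P_{a,k}(x), [ξ,x]⟩ = 0 for all ξ ∈ g(a), x ∈ g. -/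
open RealInnerProductSpace

/-- if `P` is an adjoint-invariant differentiable function on a Lie algebra
`E` with invariant inner product (`[∇P(z), z] = 0` for all `z`), `a ∈ E` and `ξ` lies in
the isotropy algebra `g(a)` (`[ξ, a] = 0`), then for every `l ∈ ℝ` the shifted function
`x ↦ P(x + l a)` is `ad_{g(a)}`-invariant: `⟨∇(P(· + l a))(x), [ξ, x]⟩ = 0` for all `x`.
(Hence each coefficient of the polynomial expansion `P(x + λ a) = Σ P_{a,k}(x) λᵏ` is
invariant under the adjoint action of `g(a)`.) -/
theorem argument_shift_isotropy_invariant
    {E : Type*} [NormedAddCommGroup E] [InnerProductSpace ℝ E] [FiniteDimensional ℝ E]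
    (bk : E →ₗ[ℝ] E →ₗ[ℝ] E)
    (hskew : ∀ x : E, bk x x = 0)
    (hjac : ∀ x y z : E, bk x (bk y z) = bk (bk x y) z + bk y (bk x z))
    (hinv : ∀ x y z : E, ⟪bk x y, z⟫ = ⟪x, bk y z⟫)
    (P : E → ℝ) (hPd : Differentiable ℝ P)
    (hP : ∀ z : E, bk (gradient P z) z = 0)
    (a ξ : E) (hξ : bk ξ a = 0) :
    ∀ (l : ℝ) (x : E), ⟪gradient (fun y => P (y + l • a)) x, bk ξ x⟫ = 0 := by
  intro l x
  set c := l • a with hc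
  set z := x + c with hz
  -- gradient of shifted function
  have hgrad : gradient (fun y => P (y + c)) x = gradient P z := by
    have h1 : HasFDerivAt P (fderiv ℝ P z) z := (hPd z).hasFDerivAt
    have h2 : HasFDerivAt (fun y : E => y + c) (ContinuousLinearMap.id ℝ E) x :=
      (hasFDerivAt_id x).add_const c
    have h3 : HasFDerivAt (fun y => P (y + c))
        ((fderiv ℝ P z).comp (ContinuousLinearMap.id ℝ E)) x := h1.comp x h2
    rw [ContinuousLinearMap.comp_id] at h3
    have h4 : gradient P z = (InnerProductSpace.toDual ℝ E).symm (fderiv ℝ P z) := rfl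
    have := h3.hasGradientAt.gradient
    rw [this, h4]
  rw [hgrad]
  have hξz : bk ξ z = bk ξ x := by
    simp [hz, hc, map_add, map_smul, hξ]
  rw [← hξz]
  have key : ⟪bk (gradient P z) z, ξ⟫ = ⟪gradient P z, bk z ξ⟫ := hinv _ _ _
  rw [hP z] at key
  simp only [inner_zero_left] at key
  have hskew' : bk ξ z = - bk z ξ := by
    have := hskew (ξ + z)
    simp only [map_add, LinearMap.add_apply, hskew ξ, hskew z] at this
    have h0 : bk ξ z + bk z ξ = 0 := by
      rw [add_comm]; simpa using this
    exact eq_neg_of_add_eq_zero_left h0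
  rw [hskew', inner_neg_right, ← key, neg_zero]
end

section
/- The pair (su(4), ℝ ⊕ su(2) ⊕ su(2)) is almost multiplicity free; concretely: let x = e₁₂ + e₂₃ + e₃₄ ∈ su(4) (viewed inside gl₄(ℂ), with e_{ij} the standard real skew-symmetric basis elements e_{ij} = E_{ij} - E_{ji}). Let k = ℝ·iI' ⊕ su(2) ⊕ su(2) embedded block-diagonally with 2+2 blocks and p its orthogonal complement with respect to the trace form. Then the projections pr_p(x) = e₂₃, pr_p(ix²), pr_p(x³) of the elements x, ix², x³ of the centralizer of x are linearly independent in p. -/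
/-- `e4 i j = E_{ij} - E_{ji}` as a complex 4×4 matrix (0-based indices). -/
def e4 (i j : Fin 4) : Matrix (Fin 4) (Fin 4) ℂ :=
  Matrix.single i j 1 - Matrix.single j i 1

/-- The projection onto the orthogonal complement `p` of `k = s(u(2) ⊕ u(2))` inside
`su(4)`: it kills the two diagonal 2×2 blocks and keeps the off-diagonal blocks. -/
def prp4 (X : Matrix (Fin 4) (Fin 4) ℂ) : Matrix (Fin 4) (Fin 4) ℂ :=
  Matrix.of fun i j => if ((i : ℕ) < 2 ↔ (j : ℕ) < 2) then 0 else X i j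

open Matrix Complex

def sym4 (i j : Fin 4) : Matrix (Fin 4) (Fin 4) ℂ :=
  single i j 1 + single j i 1

def x4 : Matrix (Fin 4) (Fin 4) ℂ :=
  e4 0 1 + e4 1 2 + e4 2 3

lemma prp4_smul (c : ℂ) (X : Matrix (Fin 4) (Fin 4) ℂ) : prp4 (c • X) = c • prp4 X := by
  ext i j
  simp [prp4]

lemma prp4_x4 : prp4 x4 = e4 1 2 := by
  ext i j
  fin_cases i <;> fin_cases j <;> simp [prp4, x4, e4, single_apply]

lemma prp4_x4_sq : prp4 (x4 * x4) = sym4 0 2 + sym4 1 3 := by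
  ext i j
  fin_cases i <;> fin_cases j <;>
    simp [prp4, x4, e4, sym4, mul_apply, Fin.sum_univ_four, single_apply]

lemma prp4_x4_cube : prp4 (x4 * x4 * x4) = e4 0 3 - (3 : ℂ) • e4 1 2 := by
  ext i j
  fin_cases i <;> fin_cases j <;>
    simp [prp4, x4, e4, mul_apply, Fin.sum_univ_four, single_apply] <;> norm_num

lemma linearIndependent_e4_sym4 :
    LinearIndependent ℝ ![e4 1 2, I • (sym4 0 2 + sym4 1 3), e4 0 3 - (3 : ℂ) • e4 1 2] := by
  rw [Fintype.linearIndependent_iff]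
  intro c hc
  -- the entries `(0,3)`, `(0,2)`, `(1,2)` make the system triangular
  have h2 : c 2 = 0 := by
    simpa [Fin.sum_univ_three, e4, sym4, Complex.ext_iff] using congr_fun₂ hc 0 3
  have h1 : c 1 = 0 := by
    simpa [Fin.sum_univ_three, e4, sym4, Complex.ext_iff] using congr_fun₂ hc 0 2
  have h0 : c 0 = 0 := by
    simpa [Fin.sum_univ_three, e4, sym4, Complex.ext_iff, h2] using congr_fun₂ hc 1 2
  intro i
  fin_cases i
  exacts [h0, h1, h2]

/-- for `x = e₁₂ + e₂₃ + e₃₄ ∈ su(4)` (1-based indices in the paper,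
0-based here), the projections onto `p = k^⊥` of the elements `x`, `i x²`, `x³` of the
centralizer of `x` are linearly independent over `ℝ`; hence the pair
`(su(4), ℝ ⊕ su(2) ⊕ su(2))` is almost multiplicity free. -/
theorem su4_almost_multiplicity_free :
    LinearIndependent ℝ
      ![prp4 (e4 0 1 + e4 1 2 + e4 2 3),
        prp4 ((Complex.I : ℂ) •
          ((e4 0 1 + e4 1 2 + e4 2 3) * (e4 0 1 + e4 1 2 + e4 2 3))),
        prp4 ((e4 0 1 + e4 1 2 + e4 2 3) * (e4 0 1 + e4 1 2 + e4 2 3) *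
          (e4 0 1 + e4 1 2 + e4 2 3))] := by
  change LinearIndependent ℝ ![prp4 x4, prp4 (I • (x4 * x4)), prp4 (x4 * x4 * x4)]
  rw [prp4_x4, prp4_smul, prp4_x4_sq, prp4_x4_cube]
  exact linearIndependent_e4_sym4
end

section
/- Trivial su(3)-centralizer in g₂: with the basis P₀,…,P₆,Q₀,…,Q₆ of g₂ ⊆ so(7) as above, let su(3) ⊆ g₂ be the span of {P₀, Q₀, Q₁, Q₂, Q₃, Q₄, Q₅, Q₆}, and let x = P₀ + P₁. Then the only element y of this su(3) with [y,x] = 0 is y = 0. -/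
/-- `e7 i j = E_{ij} - E_{ji}` as a real 7×7 matrix (0-based indices; the paper's
`e_{kl}` is `e7 (k-1) (l-1)`). -/
def e7 (i j : Fin 7) : Matrix (Fin 7) (Fin 7) ℝ :=
  Matrix.single i j 1 - Matrix.single j i 1

/-- `P₀ = e₃₂ + e₆₇`. -/
def P0g2 : Matrix (Fin 7) (Fin 7) ℝ := e7 2 1 + e7 5 6

/-- `P₁ = e₁₃ + e₅₇`. -/
def P1g2 : Matrix (Fin 7) (Fin 7) ℝ := e7 0 2 + e7 4 6

/-- `Q₀=e₄₅+e₆₇, Q₁=e₄₆+e₅₇, Q₂=e₅₆+e₇₄, Q₃=e₃₆+e₇₂, Q₄=e₂₆+e₃₇, Q₅=e₂₄+e₃₅, Q₆=e₂₅+e₄₃`. -/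
def Qg2 : Fin 7 → Matrix (Fin 7) (Fin 7) ℝ :=
  ![e7 3 4 + e7 5 6, e7 3 5 + e7 4 6, e7 4 5 + e7 6 3, e7 2 5 + e7 6 1,
    e7 1 5 + e7 2 6, e7 1 3 + e7 2 4, e7 1 4 + e7 3 2]

/-! With 0-based indices, every `y` in the span of `P₀, Q₀, …, Q₆` has zero row and column `0`,
while row `0` of `x` is the unit vector `e₂`. Hence row `0` of `[y, x]` is minus row `2` of `y`,
which forces `c = d₃ = d₄ = d₅ = d₆ = 0`; the entries `(3,4)`, `(3,6)` and `(4,5)` of `[y, x]` are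
`d₂`, `d₀ + d₁` and `c + d₀ - d₁`, which kill the rest. -/

lemma su3_element_eq (c : ℝ) (d : Fin 7 → ℝ) :
    c • P0g2 + ∑ j, d j • Qg2 j =
      !![0, 0, 0, 0, 0, 0, 0;
         0, 0, -c, d 5, d 6, d 4, -d 3;
         0, c, 0, -d 6, d 5, d 3, d 4;
         0, -d 5, d 6, 0, d 0, d 1, -d 2;
         0, -d 6, -d 5, -d 0, 0, d 2, d 1;
         0, -d 4, -d 3, -d 1, -d 2, 0, c + d 0;
         0, d 3, -d 4, d 2, -d 1, -c - d 0, 0] := by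
  ext i j
  fin_cases i <;> fin_cases j <;>
    simp [Fin.sum_univ_seven, Qg2, P0g2, e7, ← sub_eq_add_neg]

lemma P0g2_add_P1g2 :
    P0g2 + P1g2 =
      !![0, 0, 1, 0, 0, 0, 0;
         0, 0, -1, 0, 0, 0, 0;
         -1, 1, 0, 0, 0, 0, 0;
         0, 0, 0, 0, 0, 0, 0;
         0, 0, 0, 0, 0, 0, 1;
         0, 0, 0, 0, 0, 0, 1;
         0, 0, 0, 0, -1, -1, 0] := by
  ext i j
  fin_cases i <;> fin_cases j <;> simp [P0g2, P1g2, e7]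

lemma lie_su3_element_P0g2_add_P1g2 (c : ℝ) (d : Fin 7 → ℝ) :
    ⁅c • P0g2 + ∑ j, d j • Qg2 j, P0g2 + P1g2⁆ =
      !![0, -c, 0, d 6, -d 5, -d 3, -d 4;
         c, 0, 0, -d 6, d 3 + d 5, 2 * d 3, 2 * d 4 + d 6;
         0, 0, 0, -d 5, -d 4 - d 6, -2 * d 4, 2 * d 3 + d 5;
         -d 6, d 6, d 5, 0, d 2, d 2, d 0 + d 1;
         d 5, -d 3 - d 5, d 4 + d 6, -d 2, 0, c + d 0 - d 1, d 2;
         d 3, -2 * d 3, 2 * d 4, -d 2, -c - d 0 + d 1, 0, -d 2;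
         d 4, -2 * d 4 - d 6, -2 * d 3 - d 5, -d 0 - d 1, -d 2, d 2, 0] := by
  rw [su3_element_eq, P0g2_add_P1g2, Ring.lie_def]
  ext i j
  simp only [Matrix.sub_apply, Matrix.mul_apply, Fin.sum_univ_seven]
  fin_cases i <;> fin_cases j <;> simp <;> ring

/-- the centralizer of `x = P₀ + P₁` in the copy of `su(3)` spanned by
`{P₀, Q₀, Q₁, Q₂, Q₃, Q₄, Q₅, Q₆}` inside `g₂ ⊆ so(7)` is trivial: if
`c₀ P₀ + Σ dⱼ Qⱼ` commutes with `x` then all coefficients vanish. -/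
theorem su3_centralizer_in_g2_trivial
    (c : ℝ) (d : Fin 7 → ℝ)
    (h : ⁅c • P0g2 + ∑ j, d j • Qg2 j, P0g2 + P1g2⁆ = 0) :
    c = 0 ∧ d = 0 := by
  rw [lie_su3_element_P0g2_add_P1g2] at h
  have h01 : -c = 0 := by simpa using congrFun₂ h 0 1
  have h03 : d 6 = 0 := by simpa using congrFun₂ h 0 3
  have h04 : -d 5 = 0 := by simpa using congrFun₂ h 0 4
  have h05 : -d 3 = 0 := by simpa using congrFun₂ h 0 5
  have h06 : -d 4 = 0 := by simpa using congrFun₂ h 0 6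
  have h34 : d 2 = 0 := by simpa using congrFun₂ h 3 4
  have h36 : d 0 + d 1 = 0 := by simpa using congrFun₂ h 3 6
  have h45 : c + d 0 - d 1 = 0 := by simpa using congrFun₂ h 4 5
  refine ⟨by linarith, funext fun j => ?_⟩
  fin_cases j <;> simp <;> linarith
end
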